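/- arXiv:2211.08260 — 2 statements merged into one kernel-verified Lean document; each statement's English description precedes it below -/
import Mathlib

section
/- If V is a simple coherent sheaf on a proper variety Y over an algebraically closed field k, G is a finite cyclic group of order n acting on Y, σ generates G, and there exists an isomorphism φ : V ≅ σ*V, then there exists λ ∈ k* and a family of isomorphisms ψ_{σ^l} : V ≅ (σ^l)*V (given by ψ_{σ^l} = λ^{-l/n}·φ_{σ^l} where φ_{σ^l} is the l-fold composite of pullbacks of φ) forming a G-linearization, i.e. satisfying the cocycle condition (σ^l)*ψ_{σ^{l'}} ∘ ψ_{σ^l} = ψ_{σ^{l+l'}}. -/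
/-!
Iterating `φ` gives isomorphisms `φ_l : V ≅ (σ^l)^* V` which satisfy the cocycle identity
`(σ^l)^* φ_{l'} ∘ φ_l = φ_{l+l'}` on the nose; only the wrap-around `ι ∘ φ_n` can fail to be the
identity. Since `V` is simple, that automorphism is a scalar `λ ≠ 0`. Rescaling `φ_l` by `μ^{-l}`,
with `μ^n = λ`, keeps the cocycle identity (the exponents add) and divides the wrap-around by
`μ^n = λ`.
-/

open CategoryTheory

namespace CategoryTheory

section IteratedPullback

variable {C : Type*} [Category C] (F : ℕ → C ⥤ C) (hid : F 0 = 𝟭 C)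
  (hcomp : ∀ a b : ℕ, F b ⋙ F a = F (a + b)) {V : C} (φ : V ⟶ (F 1).obj V)

/-- `ψ l` is the composite `(σ^{l-1})^* φ ∘ ⋯ ∘ σ^* φ ∘ φ`, with `F l` in the role of `(σ^l)^*`. -/
structure IsIteratedPullback (ψ : ∀ l : ℕ, V ⟶ (F l).obj V) : Prop where
  zero : ψ 0 = eqToHom (congrArg (fun H : C ⥤ C => H.obj V) hid).symm
  succ : ∀ l : ℕ, ψ (l + 1) = φ ≫ (F 1).map (ψ l) ≫
    eqToHom ((congrArg (fun H : C ⥤ C => H.obj V) (hcomp 1 l)).trans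
      (congrArg (fun m : ℕ => (F m).obj V) (Nat.add_comm 1 l)))

variable {F hid hcomp φ} {ψ : ∀ l : ℕ, V ⟶ (F l).obj V}

theorem IsIteratedPullback.comp_map_eq_succ (hψ : IsIteratedPullback F hid hcomp φ ψ) (l : ℕ) :
    ψ l ≫ (F l).map φ ≫ eqToHom (congrArg (fun H : C ⥤ C => H.obj V) (hcomp l 1)) =
      ψ (l + 1) := by
  induction l with
  | zero =>
    rw [hψ.succ, hψ.zero, Functor.congr_hom hid φ]
    simp [eqToHom_map]
  | succ l ih =>
    have hF : F l ⋙ F 1 = F (l + 1) := (hcomp 1 l).trans (congrArg F (Nat.add_comm 1 l))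
    rw [hψ.succ l, hψ.succ (l + 1), ← ih, Functor.congr_hom hF.symm φ]
    simp [eqToHom_map]

theorem IsIteratedPullback.comp_map (hψ : IsIteratedPullback F hid hcomp φ ψ) (l l' : ℕ) :
    ψ l ≫ (F l).map (ψ l') ≫ eqToHom (congrArg (fun H : C ⥤ C => H.obj V) (hcomp l l')) =
      ψ (l + l') := by
  induction l' with
  | zero => simp [hψ.zero, eqToHom_map]
  | succ l' ih =>
    show _ = ψ (l + l' + 1)
    rw [← hψ.comp_map_eq_succ l', ← hψ.comp_map_eq_succ (l + l'), ← ih]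
    simp only [Functor.map_comp, Category.assoc, eqToHom_map, ← Functor.comp_map,
      Functor.congr_hom (hcomp l l') φ, eqToHom_trans]

end IteratedPullback

theorem smul_comp_map_smul_comp {k C D : Type*} [CommSemiring k] [Category C] [Preadditive C]
    [Linear k C] [Category D] [Preadditive D] [Linear k D] (G : C ⥤ D)
    (hG : ∀ (X Y : C) (f : X ⟶ Y) (c : k), G.map (c • f) = c • G.map f)
    {X : D} {Y Z : C} {W : D} (a b : k) (f : X ⟶ G.obj Y) (g : Y ⟶ Z) (h : G.obj Z ⟶ W) :
    (a • f) ≫ G.map (b • g) ≫ h = (a * b) • (f ≫ G.map g ≫ h) := by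
  simp only [hG, Linear.smul_comp, Linear.comp_smul, smul_smul, mul_comm b a]

theorem exists_units_smul_id_of_isIso {k C : Type*} [DivisionRing k] [Category C]
    [Preadditive C] [Linear k C] {V : C} (hsimple : ∀ f : V ⟶ V, ∃ c : k, f = c • 𝟙 V)
    (f : V ⟶ V) [IsIso f] : ∃ u : kˣ, f = (u : k) • 𝟙 V := by
  obtain ⟨c, hc⟩ := hsimple f
  by_cases hc0 : c = 0
  · obtain ⟨g, hfg, -⟩ := IsIso.out (f := f)
    have hV : 𝟙 V = 0 := by rw [← hfg, hc, hc0, zero_smul, Limits.zero_comp]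
    exact ⟨1, by rw [hc, hc0, zero_smul, Units.val_one, one_smul, hV]⟩
  · exact ⟨Units.mk0 c hc0, hc⟩

end CategoryTheory

theorem IsAlgClosed.exists_units_pow_eq {k : Type*} [Field k] [IsAlgClosed k] (u : kˣ) {n : ℕ}
    (hn : 0 < n) : ∃ v : kˣ, v ^ n = u := by
  obtain ⟨z, hz⟩ := IsAlgClosed.exists_pow_nat_eq (u : k) hn
  have hz0 : z ≠ 0 := by
    rintro rfl
    exact u.ne_zero (by rw [← hz, zero_pow hn.ne'])
  exact ⟨Units.mk0 z hz0, Units.ext (by simpa using hz)⟩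

theorem cyclic_descent_linearization_general
    {k : Type} [Field k] [IsAlgClosed k]
    {C : Type} [Category C] [Preadditive C] [CategoryTheory.Linear k C]
    (n : ℕ) (hn : 0 < n)
    (F : ℕ → (C ⥤ C)) (V : C)
    (hid : F 0 = 𝟭 C)
    (hcomp : ∀ a b : ℕ, F b ⋙ F a = F (a + b))
    (hlin : ∀ (l : ℕ) (X Y : C) (f : X ⟶ Y) (c : k),
      (F l).map (c • f) = c • (F l).map f)
    (hsimple : ∀ f : V ⟶ V, ∃ c : k, f = c • 𝟙 V)
    (φ : V ≅ (F 1).obj V)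
    (ι : (F n).obj V ≅ V)
    (φfam : ∀ l : ℕ, V ≅ (F l).obj V)
    (hφ0 : (φfam 0).hom =
      eqToHom (congrArg (fun H : C ⥤ C => H.obj V) hid).symm)
    (hφsucc : ∀ l : ℕ, (φfam (l + 1)).hom =
      φ.hom ≫ (F 1).map ((φfam l).hom) ≫
        eqToHom ((congrArg (fun H : C ⥤ C => H.obj V) (hcomp 1 l)).trans
          (congrArg (fun m : ℕ => (F m).obj V) (Nat.add_comm 1 l)))) :
    ∃ lam mu : kˣ,
      ((mu : k) ^ n = (lam : k)) ∧
      ((φfam n).hom ≫ ι.hom = (lam : k) • 𝟙 V) ∧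
      (∀ l l' : ℕ, l + l' < n →
        ((((mu⁻¹ : kˣ) : k) ^ l • (φfam l).hom) ≫
            (F l).map ((((mu⁻¹ : kˣ) : k) ^ l' • (φfam l').hom)) ≫
            eqToHom (congrArg (fun H : C ⥤ C => H.obj V) (hcomp l l')) =
          (((mu⁻¹ : kˣ) : k) ^ (l + l') • (φfam (l + l')).hom))) ∧
      (∀ (l l' : ℕ) (h : l + l' = n),
        ((((mu⁻¹ : kˣ) : k) ^ l • (φfam l).hom) ≫
            (F l).map ((((mu⁻¹ : kˣ) : k) ^ l' • (φfam l').hom)) ≫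
            eqToHom (congrArg (fun H : C ⥤ C => H.obj V) (hcomp l l')) ≫
            eqToHom (congrArg (fun m : ℕ => (F m).obj V) h) ≫ ι.hom =
          𝟙 V)) := by
  have hiter : IsIteratedPullback F hid hcomp φ.hom (fun l => (φfam l).hom) := ⟨hφ0, hφsucc⟩
  obtain ⟨lam, hlam⟩ := exists_units_smul_id_of_isIso hsimple ((φfam n).hom ≫ ι.hom)
  obtain ⟨mu, hmu⟩ := IsAlgClosed.exists_units_pow_eq lam hn
  have hscalar : ((mu⁻¹ : kˣ) : k) ^ n * lam = 1 := by
    rw [← hmu, ← Units.val_pow_eq_pow_val, ← Units.val_mul, inv_pow, inv_mul_cancel, Units.val_one]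
  refine ⟨lam, mu, by rw [← hmu, Units.val_pow_eq_pow_val], hlam, fun l l' _ => ?_, ?_⟩
  · rw [smul_comp_map_smul_comp _ (hlin l), hiter.comp_map, pow_add]
  · rintro l l' rfl
    rw [eqToHom_refl, Category.id_comp, reassoc_of% smul_comp_map_smul_comp _ (hlin l),
      Linear.smul_comp, hiter.comp_map, hlam, smul_smul, ← pow_add, hscalar, one_smul]

theorem cyclic_descent_linearization
    {k : Type} [Field k] [IsAlgClosed k]
    {C : Type} [Category C] [Preadditive C] [CategoryTheory.Linear k C]
    (n : ℕ) (hn : 0 < n)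
    (F : ℕ → (C ⥤ C)) (V : C)
    (hid : F 0 = 𝟭 C)
    (hcomp : ∀ a b : ℕ, F b ⋙ F a = F (a + b))
    (hlin : ∀ (l : ℕ) (X Y : C) (f : X ⟶ Y) (c : k),
      (F l).map (c • f) = c • (F l).map f)
    (hsimple : ∀ f : V ⟶ V, ∃ c : k, f = c • 𝟙 V)
    (φ : V ≅ (F 1).obj V)
    (ι : (F n).obj V ≅ V)
    (φfam : ∀ l : ℕ, V ≅ (F l).obj V)
    (hφ0 : (φfam 0).hom =
      eqToHom (congrArg (fun H : C ⥤ C => H.obj V) hid).symm)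
    (hφ1 : φfam 1 = φ)
    (hφsucc : ∀ l : ℕ, (φfam (l + 1)).hom =
      φ.hom ≫ (F 1).map ((φfam l).hom) ≫
        eqToHom ((congrArg (fun H : C ⥤ C => H.obj V) (hcomp 1 l)).trans
          (congrArg (fun m : ℕ => (F m).obj V) (Nat.add_comm 1 l)))) :
    ∃ lam mu : kˣ,
      ((mu : k) ^ n = (lam : k)) ∧
      ((φfam n).hom ≫ ι.hom = (lam : k) • 𝟙 V) ∧
      (∀ l l' : ℕ, l + l' < n →
        ((((mu⁻¹ : kˣ) : k) ^ l • (φfam l).hom) ≫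
            (F l).map ((((mu⁻¹ : kˣ) : k) ^ l' • (φfam l').hom)) ≫
            eqToHom (congrArg (fun H : C ⥤ C => H.obj V) (hcomp l l')) =
          (((mu⁻¹ : kˣ) : k) ^ (l + l') • (φfam (l + l')).hom))) ∧
      (∀ (l l' : ℕ) (h : l + l' = n),
        ((((mu⁻¹ : kˣ) : k) ^ l • (φfam l).hom) ≫
            (F l).map ((((mu⁻¹ : kˣ) : k) ^ l' • (φfam l').hom)) ≫
            eqToHom (congrArg (fun H : C ⥤ C => H.obj V) (hcomp l l')) ≫
            eqToHom (congrArg (fun m : ℕ => (F m).obj V) h) ≫ ι.hom =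
          𝟙 V)) :=
  cyclic_descent_linearization_general n hn F V hid hcomp hlin hsimple φ ι φfam hφ0 hφsucc
end

section
/- Let Gal be a profinite group with H^2(Gal, μ) = 0 for a finite abelian group μ (with trivial action), let G be a finite quotient of Gal, and let λ ∈ H^2(G, μ) be a class with trivial G-action on μ, corresponding to a central extension 0 → μ → G' → G → 0. Then there exists a finite group H and surjections Gal ↠ H ↠ G such that the kernel K of H ↠ G is a central cyclic subgroup of H isomorphic to a subgroup of μ, and the pullback of λ to H^2(H, μ) vanishes. -/
/-!
Pull the extension `μ ↪ G' ↠ G` back along `f : Gal ↠ G`. The pullback `Gal ×_G G'` is a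
central extension of `Gal` by `μ`, so it splits, and the splitting composed with the projection to
`G'` is a lift `σ : Gal →* G'` of `f`. Take `H = σ(Gal) ≤ G'`: then `H ↠ G`, its kernel lies
in `ker p ≅ μ` (hence is central and cyclic), and the inclusion `H ≤ G'` is the required lift,
so `λ` dies on `H`.
-/

open Function

universe u

structure IsCentralExtension {μ E Γ : Type*} [CommGroup μ] [Group E] [Group Γ]
    (i : μ →* E) (q : E →* Γ) : Prop where
  injective : Injective i
  surjective : Surjective q
  map_mem_center : ∀ m, i m ∈ Subgroup.center E
  range_eq_ker : i.range = q.ker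

theorem Subgroup.subgroupOf_le_center {G : Type*} [Group G] {K : Subgroup G}
    (hK : K ≤ Subgroup.center G) (H : Subgroup G) : K.subgroupOf H ≤ Subgroup.center H :=
  fun _ hx => Subgroup.mem_center_iff.mpr fun y =>
    Subtype.ext (Subgroup.mem_center_iff.mp (hK hx) y)

def pullbackSubgroup {Γ G G' : Type*} [Group Γ] [Group G] [Group G']
    (f : Γ →* G) (p : G' →* G) : Subgroup (Γ × G') :=
  (f.comp (MonoidHom.fst Γ G')).eqLocus (p.comp (MonoidHom.snd Γ G'))

theorem mem_pullbackSubgroup {Γ G G' : Type*} [Group Γ] [Group G] [Group G']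
    {f : Γ →* G} {p : G' →* G} {x : Γ × G'} : x ∈ pullbackSubgroup f p ↔ f x.1 = p x.2 :=
  Iff.rfl

namespace IsCentralExtension

variable {μ G G' : Type*} [CommGroup μ] [Group G] [Group G'] {i : μ →* G'} {p : G' →* G}

theorem ker_le_center (h : IsCentralExtension i p) : p.ker ≤ Subgroup.center G' := by
  rintro _ hx
  obtain ⟨m, rfl⟩ := h.range_eq_ker ▸ hx
  exact h.map_mem_center m

theorem finite [Finite μ] [Finite G] (h : IsCentralExtension i p) : Finite G' := by
  have : Finite p.ker := h.range_eq_ker ▸ Set.finite_range i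
  have : Finite (G' ⧸ p.ker) :=
    .of_equiv G (QuotientGroup.quotientKerEquivOfSurjective p h.surjective).symm
  exact Finite.of_subgroup_quotient p.ker

theorem exists_injective_ker_domRestrict (h : IsCentralExtension i p) (H : Subgroup G') :
    ∃ j : (p.comp H.subtype).ker →* μ, Injective j := by
  let toKer : (p.ker.subgroupOf H) →* p.ker :=
    (H.subtype.comp (p.ker.subgroupOf H).subtype).codRestrict p.ker fun x => x.2
  have toKer_injective : Injective toKer := fun x y hxy =>
    Subtype.ext (Subtype.ext (congrArg Subtype.val hxy :))
  let kerEquiv : p.ker ≃* μ :=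
    (MulEquiv.subgroupCongr h.range_eq_ker.symm).trans (MonoidHom.ofInjective h.injective).symm
  exact ⟨kerEquiv.toMonoidHom.comp toKer, kerEquiv.injective.comp toKer_injective⟩

variable {Γ : Type*} [Group Γ]

def pullbackInclusion (h : IsCentralExtension i p) (f : Γ →* G) : μ →* pullbackSubgroup f p :=
  ((1 : μ →* Γ).prod i).codRestrict _ fun m => by
    have : i m ∈ p.ker := h.range_eq_ker ▸ ⟨m, rfl⟩
    simpa [mem_pullbackSubgroup] using this.symm

theorem pullback (h : IsCentralExtension i p) (f : Γ →* G) :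
    IsCentralExtension (h.pullbackInclusion f)
      ((MonoidHom.fst Γ G').comp (pullbackSubgroup f p).subtype) where
  injective _ _ hmn := h.injective (congrArg (fun x : pullbackSubgroup f p => x.1.2) hmn :)
  surjective g := by
    obtain ⟨g', hg'⟩ := h.surjective (f g)
    exact ⟨⟨(g, g'), hg'.symm⟩, rfl⟩
  map_mem_center m := Subgroup.mem_center_iff.mpr fun x => Subtype.ext <| Prod.ext
    (by simp [pullbackInclusion]) (Subgroup.mem_center_iff.mp (h.map_mem_center m) x.1.2)
  range_eq_ker := by
    ext ⟨⟨g, g'⟩, hx⟩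
    simp only [MonoidHom.mem_range, MonoidHom.mem_ker, MonoidHom.coe_comp, comp_apply,
      Subgroup.coe_subtype, MonoidHom.coe_fst, Subtype.ext_iff, pullbackInclusion,
      MonoidHom.codRestrict_apply, MonoidHom.prod_apply, MonoidHom.one_apply, Prod.ext_iff]
    constructor
    · rintro ⟨m, rfl, -⟩
      rfl
    · rintro rfl
      have : g' ∈ p.ker := by simpa [mem_pullbackSubgroup] using hx.symm
      obtain ⟨m, hm⟩ := h.range_eq_ker ▸ this
      exact ⟨m, rfl, hm⟩

theorem exists_lift {Γ G' : Type u} [Group Γ] [Group G'] {i : μ →* G'} {p : G' →* G}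
    (h : IsCentralExtension i p)
    (hsplit : ∀ (E : Type u) [Group E] (j : μ →* E) (q : E →* Γ), IsCentralExtension j q →
      ∃ s : Γ →* E, q.comp s = MonoidHom.id Γ)
    (f : Γ →* G) : ∃ σ : Γ →* G', p.comp σ = f := by
  obtain ⟨s, hs⟩ := hsplit _ _ _ (h.pullback f)
  refine ⟨(MonoidHom.snd Γ G').comp ((pullbackSubgroup f p).subtype.comp s), ?_⟩
  ext g
  have hfst : (s g : Γ × G').1 = g := DFunLike.congr_fun hs g
  simpa [hfst] using ((s g).2 : f _ = _).symm

end IsCentralExtension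

theorem central_extension_trivialized_on_controlled_quotient_general
    {Gal μ G G' : Type} [Group Gal]
    [CommGroup μ] [Finite μ] [IsCyclic μ]
    [Group G] [Finite G] [Group G']
    (hH2 : ∀ (E : Type) [Group E] (j : μ →* E) (q : E →* Gal),
        Function.Injective j → Function.Surjective q →
        (∀ m : μ, j m ∈ Subgroup.center E) → j.range = q.ker →
        ∃ s : Gal →* E, q.comp s = MonoidHom.id Gal)
    (i : μ →* G') (p : G' →* G)
    (hi : Function.Injective i) (hp : Function.Surjective p)
    (hcent : ∀ m : μ, i m ∈ Subgroup.center G') (hexact : i.range = p.ker)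
    (f : Gal →* G) (hf : Function.Surjective f) :
    ∃ (H : Subgroup G') (s : Gal →* H),
      Finite H ∧
      Function.Surjective s ∧
      (∀ g : Gal, p ((s g : G')) = f g) ∧
      Function.Surjective (p.comp H.subtype) ∧
      (p.comp H.subtype).ker ≤ Subgroup.center H ∧
      IsCyclic (p.comp H.subtype).ker ∧
      (∃ j : (p.comp H.subtype).ker →* μ, Function.Injective j) ∧
      (∃ lift : H →* G', p.comp lift = p.comp H.subtype) := by
  have ext : IsCentralExtension i p := ⟨hi, hp, hcent, hexact⟩
  have : Finite G' := ext.finite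
  obtain ⟨σ, hσ⟩ := ext.exists_lift (fun E _ j q hjq => hH2 E j q hjq.1 hjq.2 hjq.3 hjq.4) f
  obtain ⟨j, hj⟩ := ext.exists_injective_ker_domRestrict σ.range
  have hσ_apply (g : Gal) : p (σ g) = f g := DFunLike.congr_fun hσ g
  refine ⟨σ.range, σ.rangeRestrict, inferInstance, σ.rangeRestrict_surjective, hσ_apply,
    ?_, Subgroup.subgroupOf_le_center ext.ker_le_center _, isCyclic_of_injective j hj, ⟨j, hj⟩,
    ⟨σ.range.subtype, rfl⟩⟩
  rw [← hσ] at hf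
  exact Surjective.of_comp (f := p.comp σ.range.subtype) (g := σ.rangeRestrict) hf

theorem central_extension_trivialized_on_controlled_quotient
    {Gal μ G G' : Type} [Group Gal]
    [TopologicalSpace Gal] [IsTopologicalGroup Gal] [CompactSpace Gal]
    [TotallyDisconnectedSpace Gal]
    [CommGroup μ] [Finite μ] [IsCyclic μ]
    [Group G] [Finite G] [Group G']
    (hH2 : ∀ (E : Type) [Group E] (j : μ →* E) (q : E →* Gal),
        Function.Injective j → Function.Surjective q →
        (∀ m : μ, j m ∈ Subgroup.center E) → j.range = q.ker →
        ∃ s : Gal →* E, q.comp s = MonoidHom.id Gal)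
    (i : μ →* G') (p : G' →* G)
    (hi : Function.Injective i) (hp : Function.Surjective p)
    (hcent : ∀ m : μ, i m ∈ Subgroup.center G') (hexact : i.range = p.ker)
    (f : Gal →* G) (hf : Function.Surjective f) :
    ∃ (H : Subgroup G') (s : Gal →* H),
      Finite H ∧
      Function.Surjective s ∧
      (∀ g : Gal, p ((s g : G')) = f g) ∧
      Function.Surjective (p.comp H.subtype) ∧
      (p.comp H.subtype).ker ≤ Subgroup.center H ∧
      IsCyclic (p.comp H.subtype).ker ∧
      (∃ j : (p.comp H.subtype).ker →* μ, Function.Injective j) ∧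
      (∃ lift : H →* G', p.comp lift = p.comp H.subtype) :=
  central_extension_trivialized_on_controlled_quotient_general hH2 i p hi hp hcent hexact f hf
end
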